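/- Let S be a positive, closed, densely defined symmetric operator on a complex Hilbert space H with Cayley transform T = [A; Γ₂D_A], and let F denote the Friedrichs extension of S. Then for ξ ∈ dom(S*): ξ ∈ dom(F) if and only if there exists a sequence (ηₙ) in dom(T) = ran(I+S) such that (I+T)ηₙ → ξ in norm and (I+A)^{1/2}(ηₙ − ηₘ) → 0 in norm as m, n → ∞. -/

import Mathlib

/-! The Cayley transform identifies `dom S` with `D` through `h ↦ (h + S h)/2`, and `I + T` maps
`(h + S h)/2` back to `h`. Since `T - A` takes values in `Dᗮ`,
`‖(I + A)^{1/2} η‖² = re ⟪η, (I + T) η⟫`, which for `η = (h + S h)/2` equals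
`(‖h‖² + ⟪h, S h⟫)/2`. For sequences with `(I + T) ηₙ = ξₙ` convergent, `ξₙ - ξₘ → 0`, so
`(I + A)^{1/2} (ηₙ - ηₘ) → 0` exactly when `⟪ξₙ - ξₘ, S (ξₙ - ξₘ)⟫ → 0`. -/

open scoped InnerProductSpace ComplexOrder
open Filter Topology

noncomputable section

/-- The defect operator `D_C = (I - C*C)^{1/2}` of a bounded operator `C` between
complex Hilbert spaces. -/
def defectOp {E F : Type*} [NormedAddCommGroup E] [InnerProductSpace ℂ E] [CompleteSpace E]
    [NormedAddCommGroup F] [InnerProductSpace ℂ F] [CompleteSpace F] (C : E →L[ℂ] F) :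
    E →L[ℂ] E :=
  CFC.sqrt (1 - ContinuousLinearMap.adjoint C ∘L C)

/-- The defect space `𝒟_C`: the closure of the range of the defect operator `D_C`. -/
def defectSpace {E F : Type*} [NormedAddCommGroup E] [InnerProductSpace ℂ E] [CompleteSpace E]
    [NormedAddCommGroup F] [InnerProductSpace ℂ F] [CompleteSpace F] (C : E →L[ℂ] F) :
    Submodule ℂ E :=
  (LinearMap.range (defectOp C : E →ₗ[ℂ] E)).topologicalClosure

/-- The positive square root of a (positive) bounded operator. -/
def opSqrt {E : Type*} [NormedAddCommGroup E] [InnerProductSpace ℂ E] [CompleteSpace E]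
    (B : E →L[ℂ] E) : E →L[ℂ] E :=
  CFC.sqrt B

variable {H : Type*} [NormedAddCommGroup H] [InnerProductSpace ℂ H] [CompleteSpace H]

lemma one_add_nonneg_of_norm_le_one {𝒜 : Type*} [CStarAlgebra 𝒜] [PartialOrder 𝒜]
    [StarOrderedRing 𝒜] {a : 𝒜} (ha : IsSelfAdjoint a) (ha1 : ‖a‖ ≤ 1) : 0 ≤ 1 + a := by
  have h1 : algebraMap ℝ 𝒜 ‖a‖ ≤ 1 := by
    simpa using algebraMap_mono 𝒜 ha1
  have h2 := ha.neg_algebraMap_norm_le_self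
  calc (0 : 𝒜) ≤ (1 - algebraMap ℝ 𝒜 ‖a‖) + (algebraMap ℝ 𝒜 ‖a‖ + a) :=
        add_nonneg (sub_nonneg.mpr h1) (neg_le_iff_add_nonneg'.mp h2)
    _ = 1 + a := by abel

lemma sq_norm_opSqrt_apply {E : Type*} [NormedAddCommGroup E] [InnerProductSpace ℂ E]
    [CompleteSpace E] {B : E →L[ℂ] E} (hB : 0 ≤ B) (x : E) :
    ‖opSqrt B x‖ ^ 2 = (⟪x, B x⟫_ℂ).re := by
  have hsa : IsSelfAdjoint (opSqrt B) := (CFC.sqrt_nonneg B).isSelfAdjoint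
  rw [ContinuousLinearMap.apply_norm_sq_eq_inner_adjoint_right,
    ← ContinuousLinearMap.star_eq_adjoint, hsa.star_eq, ← ContinuousLinearMap.mul_def, opSqrt,
    CFC.sqrt_mul_sqrt_self B hB]
  rfl

lemma tendsto_zero_iff_of_two_mul_sq_eq {ι : Type*} {l : Filter ι} {N a b : ι → ℝ}
    (hN : ∀ i, 0 ≤ N i) (ha : Tendsto a l (𝓝 0)) (h : ∀ i, 2 * N i ^ 2 = a i ^ 2 + b i) :
    Tendsto N l (𝓝 0) ↔ Tendsto b l (𝓝 0) := by
  constructor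
  · intro hNl
    have hb : b = fun i => 2 * N i ^ 2 - a i ^ 2 := funext fun i => by linarith [h i]
    simpa [hb] using (hNl.pow 2).const_mul 2 |>.sub (ha.pow 2)
  · intro hbl
    have hN' : N = fun i => Real.sqrt (2⁻¹ * (a i ^ 2 + b i)) := funext fun i => by
      rw [← h i, inv_mul_cancel_left₀ two_ne_zero, Real.sqrt_sq (hN i)]
    simpa [hN'] using (((ha.pow 2).add hbl).const_mul 2⁻¹).sqrt

lemma Complex.tendsto_zero_iff_tendsto_re {ι : Type*} {l : Filter ι} {z : ι → ℂ}
    (hz : ∀ i, (z i).im = 0) : Tendsto z l (𝓝 0) ↔ Tendsto (fun i => (z i).re) l (𝓝 0) := by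
  have : z = fun i => ((z i).re : ℂ) := funext fun i => Complex.ext rfl (by simp [hz i])
  conv_lhs => rw [this, ← Complex.ofReal_zero]
  exact tendsto_ofReal_iff

section Cayley

variable {E : Type*} [NormedAddCommGroup E] [InnerProductSpace ℂ E]

lemma inner_one_add_apply_eq_inner_coe_add_apply {D : Submodule ℂ E} {T : D →L[ℂ] E}
    {A : D →L[ℂ] D} (Γ : D → Dᗮ) (hT : ∀ η, T η = (A η : E) + Γ η) (η : D) :
    ⟪η, (1 + A) η⟫_ℂ = ⟪(η : E), η + T η⟫_ℂ := by
  rw [hT, ← add_assoc, inner_add_right (y := _ + _),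
    Submodule.inner_right_of_mem_orthogonal η.2 (Γ η).2,
    add_zero, add_apply, one_apply_eq_self, Submodule.coe_inner, Submodule.coe_add]

def halfOneAdd (S : E →ₗ.[ℂ] E) (D : Submodule ℂ E) (hD : ∀ h : S.domain, (h : E) + S h ∈ D) :
    S.domain →ₗ[ℂ] D :=
  LinearMap.codRestrict D ((2 : ℂ)⁻¹ • (S.domain.subtype + S.toFun))
    fun h => D.smul_mem _ (hD h)

variable {S : E →ₗ.[ℂ] E} {D : Submodule ℂ E} {T : D →L[ℂ] E}

lemma coe_halfOneAdd (hD : ∀ h : S.domain, (h : E) + S h ∈ D) (h : S.domain) :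
    (halfOneAdd S D hD h : E) = (2 : ℂ)⁻¹ • ((h : E) + S h) :=
  rfl

lemma halfOneAdd_surjective (hD : ∀ h : S.domain, (h : E) + S h ∈ D)
    (hDran : (D : Set E) = Set.range (fun h : S.domain => (h : E) + S h)) :
    Function.Surjective (halfOneAdd S D hD) := by
  intro η
  obtain ⟨h, hh⟩ : (η : E) ∈ Set.range (fun h : S.domain => (h : E) + S h) := hDran ▸ η.2
  refine ⟨(2 : ℂ) • h, Subtype.ext ?_⟩
  rw [coe_halfOneAdd, ← hh, S.map_smul, Submodule.coe_smul]
  module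

lemma coe_halfOneAdd_add_apply (hD : ∀ h : S.domain, (h : E) + S h ∈ D)
    (hT : ∀ (h : S.domain) (hm : (h : E) + S h ∈ D), T ⟨(h : E) + S h, hm⟩ = (h : E) - S h)
    (h : S.domain) : (halfOneAdd S D hD h : E) + T (halfOneAdd S D hD h) = h := by
  have : halfOneAdd S D hD h = (2 : ℂ)⁻¹ • ⟨(h : E) + S h, hD h⟩ := rfl
  rw [this, map_smul, hT, Submodule.coe_smul]
  module

lemma two_mul_sq_norm_opSqrt_halfOneAdd [CompleteSpace D] {A : D →L[ℂ] D} (hA : 0 ≤ 1 + A)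
    (Γ : D → Dᗮ) (hTA : ∀ η, T η = (A η : E) + Γ η) (hD : ∀ h : S.domain, (h : E) + S h ∈ D)
    (hT : ∀ (h : S.domain) (hm : (h : E) + S h ∈ D), T ⟨(h : E) + S h, hm⟩ = (h : E) - S h)
    (h : S.domain) :
    2 * ‖opSqrt (1 + A) (halfOneAdd S D hD h)‖ ^ 2 = ‖(h : E)‖ ^ 2 + (⟪(h : E), S h⟫_ℂ).re := by
  rw [sq_norm_opSqrt_apply hA, inner_one_add_apply_eq_inner_coe_add_apply Γ hTA,
    coe_halfOneAdd_add_apply hD hT, coe_halfOneAdd, inner_smul_left, inner_add_left]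
  have half : (starRingEnd ℂ) 2⁻¹ = ((2⁻¹ : ℝ) : ℂ) := by rw [map_inv₀, map_ofNat]; push_cast; rfl
  have hself : (⟪(h : E), h⟫_ℂ).re = ‖(h : E)‖ ^ 2 := inner_self_eq_norm_sq (𝕜 := ℂ) _
  have hsymm : (⟪(S h : E), h⟫_ℂ).re = (⟪(h : E), S h⟫_ℂ).re := by
    rw [← inner_conj_symm, Complex.conj_re]
  rw [half, Complex.re_ofReal_mul, Complex.add_re, hself, hsymm]
  ring

lemma tendsto_inner_sub_iff_tendsto_norm_opSqrt_sub [CompleteSpace D] {A : D →L[ℂ] D}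
    (hpos : ∀ h : S.domain, 0 ≤ ⟪S h, (h : E)⟫_ℂ) (hA : 0 ≤ 1 + A) (Γ : D → Dᗮ)
    (hTA : ∀ η, T η = (A η : E) + Γ η) (hD : ∀ h : S.domain, (h : E) + S h ∈ D)
    (hT : ∀ (h : S.domain) (hm : (h : E) + S h ∈ D), T ⟨(h : E) + S h, hm⟩ = (h : E) - S h)
    {ξn : ℕ → S.domain} (hξn : CauchySeq fun n => (ξn n : E)) :
    Tendsto (fun p : ℕ × ℕ => ⟪(ξn p.1 : E) - ξn p.2, S (ξn p.1 - ξn p.2)⟫_ℂ) atTop (𝓝 0) ↔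
      Tendsto (fun p : ℕ × ℕ =>
        ‖opSqrt (1 + A) (halfOneAdd S D hD (ξn p.1) - halfOneAdd S D hD (ξn p.2))‖)
        atTop (𝓝 0) := by
  have him : ∀ h : S.domain, (⟪(h : E), S h⟫_ℂ).im = 0 := fun h => by
    rw [← inner_conj_symm, Complex.conj_im, ← (Complex.nonneg_iff.mp (hpos h)).2, neg_zero]
  rw [cauchySeq_iff_tendsto_dist_atTop_0] at hξn
  refine (Complex.tendsto_zero_iff_tendsto_re fun p : ℕ × ℕ => him (ξn p.1 - ξn p.2)).trans ?_
  refine (tendsto_zero_iff_of_two_mul_sq_eq (fun _ => norm_nonneg _)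
    (a := fun p => ‖(ξn p.1 : E) - ξn p.2‖) (by simpa only [dist_eq_norm] using hξn)
    fun p => ?_).symm
  rw [← map_sub, two_mul_sq_norm_opSqrt_halfOneAdd hA Γ hTA hD hT]
  rfl

end Cayley

theorem statement18_general (S : H →ₗ.[ℂ] H)
    (hposS : ∀ h : S.domain, 0 ≤ ⟪S h, (h : H)⟫_ℂ)
    (D : Submodule ℂ H) [CompleteSpace D]
    (hDran : (D : Set H) = Set.range (fun h : S.domain => (h : H) + S h))
    (T : D →L[ℂ] H)
    (hTcayley : ∀ (h : S.domain) (hm : (h : H) + S h ∈ D),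
      T ⟨(h : H) + S h, hm⟩ = (h : H) - S h)
    (A : D →L[ℂ] D) (hA : IsSelfAdjoint A) (hAc : ‖A‖ ≤ 1)
    (Γ₂ : D →L[ℂ] ↥Dᗮ)
    (hdecomp : ∀ ξ : D, T ξ = (A ξ : H) + (Γ₂ (defectOp A ξ) : H))
    (ξ : H) :
    (∃ ξn : ℕ → S.domain,
      Tendsto (fun n => (ξn n : H)) atTop (𝓝 ξ) ∧
      Tendsto (fun p : ℕ × ℕ => ⟪(ξn p.1 : H) - (ξn p.2 : H), S (ξn p.1 - ξn p.2)⟫_ℂ)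
        atTop (𝓝 0)) ↔
    (∃ ηn : ℕ → D,
      Tendsto (fun n => ((ηn n : H) + T (ηn n))) atTop (𝓝 ξ) ∧
      Tendsto (fun p : ℕ × ℕ => ‖opSqrt (1 + A) (ηn p.1 - ηn p.2)‖) atTop (𝓝 0)) := by
  have hD : ∀ h : S.domain, (h : H) + S h ∈ D := fun h => by
    rw [← SetLike.mem_coe, hDran]; exact ⟨h, rfl⟩
  have hinv : ∀ h, (halfOneAdd S D hD h : H) + T (halfOneAdd S D hD h) = h :=
    coe_halfOneAdd_add_apply hD hTcayley
  have key {ξn : ℕ → S.domain} (hξn : CauchySeq fun n => (ξn n : H)) :=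
    tendsto_inner_sub_iff_tendsto_norm_opSqrt_sub hposS
      (one_add_nonneg_of_norm_le_one (𝒜 := D →L[ℂ] D) hA hAc) (fun η => Γ₂ (defectOp A η))
      hdecomp hD hTcayley hξn
  constructor
  · rintro ⟨ξn, hξn, hq⟩
    exact ⟨fun n => halfOneAdd S D hD (ξn n), by simpa only [hinv] using hξn,
      (key hξn.cauchySeq).mp hq⟩
  · rintro ⟨ηn, hηn, hq⟩
    choose ξn hξn using fun n => halfOneAdd_surjective hD hDran (ηn n)
    simp only [← hξn, hinv] at hηn hq
    exact ⟨ξn, hηn, (key hηn.cauchySeq).mpr hq⟩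

/-- Let `S` be a positive, closed, densely defined symmetric operator on a complex Hilbert
space `H` with Cayley transform `T = [A; Γ₂ D_A]` on `D = dom T = ran (I+S)`, and let `F`
denote the Friedrichs extension of `S`. Then for `ξ ∈ dom S*`: `ξ ∈ dom F` (i.e. there is a
sequence `(ξₙ)` in `dom S` with `ξₙ → ξ` and `⟨ξₙ − ξₘ, S(ξₙ − ξₘ)⟩ → 0`) if and only if
there exists a sequence `(ηₙ)` in `dom T = ran (I+S)` such that `(I+T)ηₙ → ξ` in norm and
`(I+A)^{1/2}(ηₙ − ηₘ) → 0` in norm as `m, n → ∞`. -/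
theorem statement18 (S : H →ₗ.[ℂ] H) (hdense : Dense (S.domain : Set H))
    (hclosed : S.IsClosed)
    (hsymmS : ∀ h g : S.domain, ⟪S h, (g : H)⟫_ℂ = ⟪(h : H), S g⟫_ℂ)
    (hposS : ∀ h : S.domain, 0 ≤ ⟪S h, (h : H)⟫_ℂ)
    (D : Submodule ℂ H) [CompleteSpace D]
    (hDran : (D : Set H) = Set.range (fun h : S.domain => (h : H) + S h))
    (T : D →L[ℂ] H)
    (hTcayley : ∀ (h : S.domain) (hm : (h : H) + S h ∈ D),
      T ⟨(h : H) + S h, hm⟩ = (h : H) - S h)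
    (A : D →L[ℂ] D) (hA : IsSelfAdjoint A) (hAc : ‖A‖ ≤ 1)
    (Γ₂ : D →L[ℂ] ↥Dᗮ) (hΓ₂c : ‖Γ₂‖ ≤ 1) (hΓ₂ker : (defectSpace A)ᗮ ≤ LinearMap.ker (Γ₂ : D →ₗ[ℂ] ↥Dᗮ))
    (hdecomp : ∀ ξ : D, T ξ = (A ξ : H) + (Γ₂ (defectOp A ξ) : H))
    (ξ : H) (hξ : ξ ∈ S.adjoint.domain) :
    (∃ ξn : ℕ → S.domain,
      Tendsto (fun n => (ξn n : H)) atTop (𝓝 ξ) ∧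
      Tendsto (fun p : ℕ × ℕ => ⟪(ξn p.1 : H) - (ξn p.2 : H), S (ξn p.1 - ξn p.2)⟫_ℂ)
        atTop (𝓝 0)) ↔
    (∃ ηn : ℕ → D,
      Tendsto (fun n => ((ηn n : H) + T (ηn n))) atTop (𝓝 ξ) ∧
      Tendsto (fun p : ℕ × ℕ => ‖opSqrt (1 + A) (ηn p.1 - ηn p.2)‖) atTop (𝓝 0)) :=
  statement18_general S hposS D hDran T hTcayley A hA hAc Γ₂ hdecomp ξ
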